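/- Let k be the true number of false elementary hypotheses among n hypotheses. Suppose for each u in {1,...,n}, P^{u/n} is a random variable (a partial conjunction p-value) such that whenever fewer than u hypotheses are false (i.e., k < u), Pr(P^{u/n} ≤ α) ≤ α. Define u_max = max{u : P^{i/n} ≤ α for all i = 1,...,u} (and u_max = 0 if the set is empty). Then Pr(k ≥ u_max) ≥ 1 − α. -/
import Mathlib


open MeasureTheory Finset
open scoped Classical

/-- Theorem 1 (partial conjunction confidence bound): if each partial conjunction
p-value `P u` is valid (level `α` whenever fewer than `u` hypotheses are false, i.e.
`k < u`), then the lower bound `u_max` satisfies `Pr(k ≥ u_max) ≥ 1 - α`. -/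
theorem partial_conjunction_confidence_bound
    {Ω : Type*} [MeasurableSpace Ω] (μ : Measure Ω) [IsProbabilityMeasure μ]
    (n k : ℕ) (hk : k ≤ n) (α : ℝ) (hα : α ∈ Set.Ioo (0 : ℝ) 1)
    (P : ℕ → Ω → ℝ) (hmeas : ∀ u, Measurable (P u))
    (hvalid : ∀ u, 1 ≤ u → u ≤ n → k < u →
      μ {ω | P u ω ≤ α} ≤ ENNReal.ofReal α) :
    μ {ω | ((Finset.Icc 1 n).filter
        (fun u => ∀ i ∈ Finset.Icc 1 u, P i ω ≤ α)).sup id ≤ k}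
      ≥ 1 - ENNReal.ofReal α := by
  set S := {ω | ((Finset.Icc 1 n).filter
      (fun u => ∀ i ∈ Finset.Icc 1 u, P i ω ≤ α)).sup id ≤ k} with hS
  rcases le_or_gt n k with hnk | hnk
  · -- k = n : S = univ
    have : S = Set.univ := by
      ext ω
      simp only [hS, Set.mem_setOf_eq, Set.mem_univ, iff_true]
      refine Finset.sup_le fun u hu => ?_
      simp only [Finset.mem_filter, Finset.mem_Icc] at hu
      simp only [id_eq]; omega
    rw [this, measure_univ]
    exact tsub_le_self
  -- k < n
  have hsub : Sᶜ ⊆ {ω | P (k+1) ω ≤ α} := by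
    intro ω hω
    simp only [hS, Set.mem_compl_iff, Set.mem_setOf_eq, not_le] at hω
    obtain ⟨u, hu, hku⟩ : ∃ u ∈ (Finset.Icc 1 n).filter
        (fun u => ∀ i ∈ Finset.Icc 1 u, P i ω ≤ α), k < id u := by
      by_contra h
      push_neg at h
      have := Finset.sup_le (fun u hu => (h u hu))
      omega
    simp only [id_eq] at hku
    simp only [Finset.mem_filter, Finset.mem_Icc] at hu
    exact hu.2 (k+1) ⟨by omega, hku⟩
  have hcompl : μ Sᶜ ≤ ENNReal.ofReal α := by
    refine le_trans (measure_mono hsub) ?_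
    exact hvalid (k+1) (Nat.succ_le_succ (Nat.zero_le k)) hnk (Nat.lt_succ_self k)
  have hmS : MeasurableSet S := by
    have hEq : S = ⋂ u ∈ (Finset.Icc (k+1) n),
        (⋂ i ∈ Finset.Icc 1 u, {ω | P i ω ≤ α})ᶜ := by
      ext ω
      simp only [hS, Set.mem_setOf_eq, Set.mem_iInter, Set.mem_compl_iff,
        Set.mem_iInter]
      constructor
      · intro h u hu hall
        have hu' := Finset.mem_Icc.mp hu
        have hmem : u ∈ (Finset.Icc 1 n).filter
            (fun u => ∀ i ∈ Finset.Icc 1 u, P i ω ≤ α) := by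
          simp only [Finset.mem_filter, Finset.mem_Icc]
          exact ⟨⟨by omega, hu'.2⟩, fun i hi => hall i (Finset.mem_Icc.mpr hi)⟩
        have := Finset.le_sup (f := id) hmem
        simp only [id_eq] at this
        omega
      · intro h
        refine Finset.sup_le fun u hu => ?_
        simp only [Finset.mem_filter, Finset.mem_Icc] at hu
        simp only [id_eq]
        by_contra hc
        exact h u (Finset.mem_Icc.mpr ⟨by omega, hu.1.2⟩) (fun i hi => hu.2 i (Finset.mem_Icc.mp hi))
    rw [hEq]
    refine MeasurableSet.biInter (Set.to_countable _) fun u _ => ?_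
    exact (MeasurableSet.biInter (Set.to_countable _)
      (fun i _ => measurableSet_le (hmeas i) measurable_const)).compl
  have hμS : 1 - μ Sᶜ = μ S := by
    rw [measure_compl hmS (measure_ne_top μ S), measure_univ,
      ENNReal.sub_sub_cancel (by simp) (prob_le_one)]
  calc 1 - ENNReal.ofReal α ≤ 1 - μ Sᶜ := tsub_le_tsub le_rfl hcompl
    _ = μ S := hμS
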